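/- arXiv:1012.3916 — 2 statements merged into one kernel-verified Lean document; each statement's English description precedes it below -/
import Mathlib

section
/- If P is a real analytic function that is even at 0 (all odd-order derivatives of P vanish at 0), and h satisfies the ODE h'' = (1/2)P'(h) with h(0) = 0 and h'(0) = 1, then h is odd at 0, i.e., all even-order derivatives of h vanish at 0: h^(2k)(0) = 0 for every natural number k. -/
open Set Filter Topology Metric

/-- An analytic function all of whose iterated derivatives at a point vanish is
eventually zero near that point. -/
lemma eventually_zero_of_iteratedDeriv_zero {f : ℝ → ℝ} {x : ℝ}
    (hf : AnalyticAt ℝ f x) (hd : ∀ n : ℕ, iteratedDeriv n f x = 0) :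
    f =ᶠ[𝓝 x] 0 := by
  obtain ⟨p, hp⟩ := hf
  obtain ⟨r, hpr⟩ := hp
  have hball : Metric.eball x r ∈ 𝓝 x := Metric.eball_mem_nhds x hpr.r_pos
  filter_upwards [hball] with z hz
  have hy : (z - x) ∈ Metric.eball (0 : ℝ) r := by
    rw [Metric.mem_eball] at hz ⊢
    simpa [edist_eq_enorm_sub] using hz
  have hsum := hpr.hasSum_iteratedFDeriv hy
  have hzero : (fun n : ℕ => ((n.factorial : ℝ)⁻¹ • iteratedFDeriv ℝ n f x fun _ => z - x))
      = fun _ => (0 : ℝ) := by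
    funext n
    have : iteratedFDeriv ℝ n f x (fun _ => z - x)
        = (∏ _i : Fin n, (z - x)) • iteratedDeriv n f x :=
      iteratedFDeriv_apply_eq_iteratedDeriv_mul_prod
    simp [this, hd n]
  rw [hzero] at hsum
  have : f (x + (z - x)) = 0 := hsum.unique hasSum_zero
  simpa using this

theorem h_odd_at_zero (P h : ℝ → ℝ)
    (hP : ∀ x : ℝ, AnalyticAt ℝ P x)
    (hPeven : ∀ j : ℕ, iteratedDeriv (2 * j + 1) P 0 = 0)
    (hh : ContDiff ℝ (⊤ : ℕ∞) h)
    (hode : ∀ t : ℝ, deriv (deriv h) t = (1 / 2) * deriv P (h t))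
    (h0 : h 0 = 0) (h1 : deriv h 0 = 1) :
    ∀ k : ℕ, iteratedDeriv (2 * k) h 0 = 0 := by
  -- notation
  set Q : ℝ → ℝ := deriv P with hQdef
  have hPon : AnalyticOnNhd ℝ P univ := fun x _ => hP x
  have hPneg : AnalyticOnNhd ℝ (fun x => P (-x)) univ := by
    intro x _
    exact (hP (-x)).comp (analyticAt_id.neg)
  have hPcd : ContDiff ℝ (⊤ : ℕ∞) P := contDiff_iff_contDiffAt.mpr fun x => (hP x).contDiffAt
  have hPncd : ContDiff ℝ (⊤ : ℕ∞) (fun x => P (-x)) := hPcd.comp (contDiff_neg)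
  -- P is even
  have hPeq : P = fun x => P (-x) := by
    apply AnalyticOnNhd.eq_of_eventuallyEq hPon hPneg (z₀ := (0:ℝ))
    have hD : AnalyticAt ℝ (P - fun x => P (-x)) 0 := (hP 0).sub (hPneg 0 (mem_univ 0))
    have hDd : ∀ n : ℕ, iteratedDeriv n (P - fun x => P (-x)) 0 = 0 := by
      intro n
      have hsub : iteratedDeriv n (P - fun x => P (-x)) 0
          = iteratedDeriv n P 0 - iteratedDeriv n (fun x => P (-x)) 0 := by
        simp only [← iteratedDerivWithin_univ]
        exact iteratedDerivWithin_sub (mem_univ 0) uniqueDiffOn_univ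
          (hPcd.contDiffWithinAt.of_le (mod_cast le_top)) (hPncd.contDiffWithinAt.of_le (mod_cast le_top))
      rw [hsub, iteratedDeriv_comp_neg, neg_zero]
      rcases Nat.even_or_odd n with he | ho
      · rw [he.neg_one_pow]; simp
      · obtain ⟨j, rfl⟩ := ho
        rw [hPeven j]; simp
    have := eventually_zero_of_iteratedDeriv_zero hD hDd
    filter_upwards [this] with z hz
    have : P z - P (-z) = 0 := hz
    linarith
  have hQodd : ∀ x : ℝ, Q (-x) = - Q x := by
    intro x
    have : deriv (fun x => P (-x)) x = - deriv P (-x) := by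
      rw [deriv_comp_neg]
    rw [← hPeq] at this
    simp only [hQdef]
    linarith [this]
  -- Q is smooth
  have hQan : AnalyticOnNhd ℝ Q univ := hPon.deriv
  have hQcd : ContDiff ℝ (⊤ : ℕ∞) Q := contDiff_iff_contDiffAt.mpr
    fun x => (hQan x (mem_univ x)).contDiffAt
  -- the vector field
  set F : ℝ × ℝ → ℝ × ℝ := fun p => (p.2, (1/2) * Q p.1) with hFdef
  have hFcd : ContDiff ℝ 1 F := by
    apply ContDiff.prodMk
    · exact contDiff_snd
    · exact (contDiff_const.mul (hQcd.of_le (mod_cast le_top) |>.comp contDiff_fst))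
  obtain ⟨K, u, hu, hlip⟩ := (hFcd.contDiffAt (x := ((0:ℝ),(1:ℝ)))).exists_lipschitzOnWith
  -- solution curves
  have hdh : Differentiable ℝ h := hh.differentiable (by simp)
  have hdh' : ContDiff ℝ ((⊤ : ℕ∞) : WithTop ℕ∞) (deriv h) := (contDiff_infty_iff_deriv.mp (hh.of_le (mod_cast le_top))).2
  have hdh'd : Differentiable ℝ (deriv h) := hdh'.differentiable (by simp)
  set f : ℝ → ℝ × ℝ := fun t => (h t, deriv h t) with hfdef
  set g : ℝ → ℝ × ℝ := fun t => (-h (-t), deriv h (-t)) with hgdef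
  have hfc : Continuous f := ((hdh.continuous).prodMk hdh'd.continuous)
  have hgc : Continuous g := by
    apply Continuous.prodMk
    · exact (hdh.continuous.comp continuous_neg).neg
    · exact hdh'd.continuous.comp continuous_neg
  have hf0 : f 0 = (0, 1) := by simp [hfdef, h0, h1]
  have hg0 : g 0 = (0, 1) := by simp [hgdef, h0, h1]
  have hfder : ∀ t : ℝ, HasDerivAt f (F (f t)) t := by
    intro t
    have h1' : HasDerivAt h (deriv h t) t := (hdh t).hasDerivAt
    have h2' : HasDerivAt (deriv h) ((1/2) * Q (h t)) t := by
      have := (hdh'd t).hasDerivAt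
      rwa [hode t] at this
    exact h1'.prodMk h2'
  have hgder : ∀ t : ℝ, HasDerivAt g (F (g t)) t := by
    intro t
    have hneg : HasDerivAt (fun s : ℝ => -s) (-1 : ℝ) t := (hasDerivAt_id t).neg
    have h1' : HasDerivAt (fun s => h (-s)) (deriv h (-t) * (-1)) t :=
      (hdh (-t)).hasDerivAt.comp t hneg
    have h1'' : HasDerivAt (fun s => -h (-s)) (deriv h (-t)) t := by
      have := h1'.neg
      simp only [mul_neg, mul_one, neg_neg] at this; exact this
    have h2' : HasDerivAt (fun s => deriv h (-s)) (deriv (deriv h) (-t) * (-1)) t :=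
      (hdh'd (-t)).hasDerivAt.comp t hneg
    have h2'' : HasDerivAt (fun s => deriv h (-s)) ((1/2) * Q (-h (-t))) t := by
      have heq2 : deriv (deriv h) (-t) * (-1) = (1/2) * Q (-h (-t)) := by
        rw [hode (-t), hQodd (h (-t))]; ring
      rwa [heq2] at h2'
    exact h1''.prodMk h2''
  -- local uniqueness
  have hfg : f =ᶠ[𝓝 (0:ℝ)] g := by
    have hfmem : ∀ᶠ t in 𝓝 (0:ℝ), f t ∈ u := by
      have : ContinuousAt f 0 := hfc.continuousAt
      have := this.preimage_mem_nhds (by rwa [hf0])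
      filter_upwards [this] with t ht using ht
    have hgmem : ∀ᶠ t in 𝓝 (0:ℝ), g t ∈ u := by
      have : ContinuousAt g 0 := hgc.continuousAt
      have := this.preimage_mem_nhds (by rwa [hg0])
      filter_upwards [this] with t ht using ht
    refine ODE_solution_unique_of_eventually
      (v := fun _ => F) (s := fun _ => u) (K := K) (Eventually.of_forall fun _ => hlip) ?_ ?_ (by rw [hf0, hg0])
    · filter_upwards [hfmem] with t ht using ⟨hfder t, ht⟩
    · filter_upwards [hgmem] with t ht using ⟨hgder t, ht⟩
  have hhg : h =ᶠ[𝓝 (0:ℝ)] fun t => -h (-t) := by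
    filter_upwards [hfg] with t ht
    exact congrArg Prod.fst ht
  intro k
  have e1 : iteratedDeriv (2 * k) h 0 = iteratedDeriv (2 * k) (fun t => -h (-t)) 0 :=
    Filter.EventuallyEq.iteratedDeriv_eq (2 * k) hhg
  have e2 : iteratedDeriv (2 * k) (fun t => -h (-t)) 0
      = -iteratedDeriv (2 * k) (fun t => h (-t)) 0 :=
    iteratedDeriv_neg (2 * k) (fun t => h (-t)) 0
  have e3 : iteratedDeriv (2 * k) (fun t => h (-t)) 0
      = (-1 : ℝ) ^ (2 * k) • iteratedDeriv (2 * k) h 0 :=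
    iteratedDeriv_comp_neg (2 * k) h 0 |>.trans (by rw [neg_zero])
  have hpow : (-1 : ℝ) ^ (2 * k) = 1 := Even.neg_one_pow ⟨k, by ring⟩
  rw [e2, e3, hpow, one_smul] at e1
  linarith
end

section
/- Let P be real analytic and even at 0, and let h solve h'' = (1/2)P'(h), h(0)=0, h'(0)=1. If all even derivatives h^(2l)(0) vanish for l < k, then the l-th derivative of t ↦ P(h(t)) at 0 vanishes for every odd l < 2k. -/
theorem odd_derivs_comp_vanish (P h : ℝ → ℝ) (k : ℕ)
    (hP : ∀ x : ℝ, AnalyticAt ℝ P x)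
    (hPeven : ∀ j : ℕ, iteratedDeriv (2 * j + 1) P 0 = 0)
    (hh : ContDiff ℝ (⊤ : ℕ∞) h)
    (hode : ∀ t : ℝ, deriv (deriv h) t = (1 / 2) * deriv P (h t))
    (h0 : h 0 = 0) (h1 : deriv h 0 = 1)
    (hind : ∀ l : ℕ, l < k → iteratedDeriv (2 * l) h 0 = 0) :
    ∀ l : ℕ, Odd l → l < 2 * k → iteratedDeriv l (P ∘ h) 0 = 0 := by
  intro l hl hlk
  have hPc : ContDiff ℝ (⊤ : ℕ∞) P := contDiff_iff_contDiffAt.2 fun x => (hP x).contDiffAt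
  have hq : HasFTaylorSeriesUpTo (⊤ : ℕ∞) P (ftaylorSeries ℝ P) :=
    contDiff_iff_ftaylorSeries.1 hPc
  have hp : HasFTaylorSeriesUpTo (⊤ : ℕ∞) h (ftaylorSeries ℝ h) :=
    contDiff_iff_ftaylorSeries.1 (hh.of_le (by simp))
  have hcomp : HasFTaylorSeriesUpTo (⊤ : ℕ∞) (P ∘ h)
      (fun x => (ftaylorSeries ℝ P (h x)).taylorComp (ftaylorSeries ℝ h x)) := by
    rw [← hasFTaylorSeriesUpToOn_univ_iff] at hq hp ⊢
    exact hq.comp hp (Set.mapsTo_univ _ _)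
  have key : iteratedFDeriv ℝ l (P ∘ h) 0 =
      (ftaylorSeries ℝ P (h 0)).taylorComp (ftaylorSeries ℝ h 0) l :=
    (hcomp.eq_iteratedFDeriv (by exact_mod_cast le_top) 0).symm
  rw [iteratedDeriv_eq_iteratedFDeriv, key, h0]
  show (∑ c : OrderedFinpartition l,
      (ftaylorSeries ℝ P 0).compAlongOrderedFinpartition (ftaylorSeries ℝ h 0) c)
      (fun _ : Fin l => (1 : ℝ)) = 0
  rw [ContinuousMultilinearMap.sum_apply]
  apply Finset.sum_eq_zero
  intro c _
  rw [FormalMultilinearSeries.compAlongOrderedFinpartition_apply,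
    OrderedFinpartition.applyOrderedFinpartition_apply]
  set r : Fin c.length → ℝ := fun m => iteratedDeriv (c.partSize m) h 0 with hr
  have hval : (fun m => (ftaylorSeries ℝ h 0 (c.partSize m)) ((fun _ => (1:ℝ)) ∘ c.emb m))
      = fun m => r m • (1 : ℝ) := by
    funext m
    simp only [hr, smul_eq_mul, mul_one]
    rw [iteratedDeriv_eq_iteratedFDeriv]
    rfl
  rw [hval, ContinuousMultilinearMap.map_smul_univ]
  have hsum : ∑ m, c.partSize m = l := by
    have := c.sum_sigma_eq_sum (fun _ : Fin l => (1 : ℕ))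
    simpa using this
  rcases Nat.even_or_odd c.length with he | ho
  · -- even length: some part has even size, giving a vanishing h-derivative factor
    have hex : ∃ m, Even (c.partSize m) := by
      by_contra hcon
      push_neg at hcon
      have hallodd : ∀ m, c.partSize m % 2 = 1 := fun m =>
        Nat.odd_iff.1 (Nat.not_even_iff_odd.1 (hcon m))
      have : l % 2 = c.length % 2 := by
        conv_lhs => rw [← hsum]
        rw [Finset.sum_nat_mod]
        simp [hallodd]
      have h1 : l % 2 = 1 := Nat.odd_iff.1 hl
      have h2 : c.length % 2 = 0 := Nat.even_iff.1 he
      omega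
    obtain ⟨m, hm⟩ := hex
    obtain ⟨j, hj⟩ := hm
    have hjlt : j < k := by
      have h1 : c.partSize m ≤ l := c.partSize_le m
      omega
    have hzero : r m = 0 := by
      have : c.partSize m = 2 * j := by omega
      rw [hr]
      simp only [this]
      exact hind j hjlt
    have : ∏ m, r m = 0 := Finset.prod_eq_zero (Finset.mem_univ m) hzero
    rw [this]
    simp
  · -- odd length: the P-derivative vanishes
    obtain ⟨j, hj⟩ := ho
    have : (ftaylorSeries ℝ P 0 c.length) (fun _ => (1 : ℝ)) = 0 := by
      have : iteratedDeriv c.length P 0 = 0 := by rw [hj]; exact hPeven j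
      rw [iteratedDeriv_eq_iteratedFDeriv] at this
      exact this
    rw [this]
    simp
end
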